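/- With Π_A, Π_B orthogonal projectors, U = (2Π_A - I)(2Π_B - I), δ ≥ 0, Θ ∈ (0,π), Λ_Θ the projector onto eigenspaces of U with phase at most Θ: if ψ₀ is a unit vector and w ∈ H satisfies ⟨ψ₀, w⟩ ≠ 0, ‖Π_A w‖² ≤ δ‖w‖², and ‖Π_B w‖² ≤ δ‖w‖², then ‖Λ_Θ ψ₀‖ ≥ |⟨ψ₀, w⟩|/‖w‖ − 2√δ·π/Θ. -/

import Mathlib

/-- The orthogonal projection onto a subspace `K`, as an endomorphism of `H`. -/
noncomputable def projOnto {H : Type*} [NormedAddCommGroup H] [InnerProductSpace ℂ H]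
    [FiniteDimensional ℂ H] (K : Submodule ℂ H) : H →L[ℂ] H :=
  K.subtypeL.comp (K.orthogonalProjectionOnto)

/-- The orthogonal projector onto the span of the eigenvectors of `U` with eigenvalue
`e^{iφ}` for `|φ| ≤ Θ`. -/
noncomputable def smallPhaseProj {H : Type*} [NormedAddCommGroup H] [InnerProductSpace ℂ H]
    [FiniteDimensional ℂ H] (U : H →L[ℂ] H) (Θ : ℝ) : H →L[ℂ] H :=
  projOnto (Submodule.span ℂ
    {x : H | ∃ φ : ℝ, |φ| ≤ Θ ∧ U x = Complex.exp (φ * Complex.I) • x})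

section Aux

lemma projOnto_sa' {H : Type*} [NormedAddCommGroup H] [InnerProductSpace ℂ H] [FiniteDimensional ℂ H] (K : Submodule ℂ H) : IsSelfAdjoint (projOnto K) := by
  unfold projOnto
  exact isSelfAdjoint_starProjection K

lemma projOnto_idem' {H : Type*} [NormedAddCommGroup H] [InnerProductSpace ℂ H] [FiniteDimensional ℂ H] (K : Submodule ℂ H) : projOnto K * projOnto K = projOnto K := by
  ext x
  simp [projOnto, Submodule.orthogonalProjectionOnto_mem_subspace_eq_self, Submodule.starProjection_eq_self_iff]

lemma refl_sa {H : Type*} [NormedAddCommGroup H] [InnerProductSpace ℂ H] [FiniteDimensional ℂ H] (K : Submodule ℂ H) : IsSelfAdjoint ((2:ℂ) • projOnto K - 1) := by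
  have hP := (projOnto_sa' K).star_eq
  rw [IsSelfAdjoint, star_sub, star_smul, star_one, hP]
  norm_num

lemma refl_sq {H : Type*} [NormedAddCommGroup H] [InnerProductSpace ℂ H] [FiniteDimensional ℂ H] (K : Submodule ℂ H) : ((2:ℂ) • projOnto K - 1) * ((2:ℂ) • projOnto K - 1) = 1 := by
  simp only [mul_sub, sub_mul, one_mul, mul_one, smul_mul_assoc, mul_smul_comm, smul_smul,
    projOnto_idem']
  module

variable {H : Type*} [NormedAddCommGroup H] [InnerProductSpace ℂ H] [FiniteDimensional ℂ H]

open Complex ContinuousLinearMap in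
lemma spectral_bound (U : H →L[ℂ] H) (hUiso : ∀ x : H, ‖U x‖ = ‖x‖)
    (hUl : star U * U = 1) (hUr : U * star U = 1)
    (Θ : ℝ) (hΘ0 : 0 < Θ) (hΘπ : Θ ≤ Real.pi)
    (hUK : ∀ x ∈ Submodule.span ℂ {x : H | ∃ φ : ℝ, |φ| ≤ Θ ∧
        U x = Complex.exp (φ * Complex.I) • x}, U x ∈ Submodule.span ℂ {x : H | ∃ φ : ℝ, |φ| ≤ Θ ∧
        U x = Complex.exp (φ * Complex.I) • x})
    (hUsK : ∀ x ∈ Submodule.span ℂ {x : H | ∃ φ : ℝ, |φ| ≤ Θ ∧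
        U x = Complex.exp (φ * Complex.I) • x}, star U x ∈ Submodule.span ℂ {x : H | ∃ φ : ℝ, |φ| ≤ Θ ∧
        U x = Complex.exp (φ * Complex.I) • x}) :
    ∀ v ∈ (Submodule.span ℂ {x : H | ∃ φ : ℝ, |φ| ≤ Θ ∧
        U x = Complex.exp (φ * Complex.I) • x})ᗮ,
      (2 - 2 * Real.cos Θ) * ‖v‖ ^ 2 ≤ ‖v - U v‖ ^ 2 := by
  set S : Set H := {x : H | ∃ φ : ℝ, |φ| ≤ Θ ∧ U x = Complex.exp (φ * Complex.I) • x} with hS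
  set K : Submodule ℂ H := Submodule.span ℂ S with hK
  intro v hv
  rcases eq_or_ne v 0 with rfl | hv0
  · simp
  set W : Submodule ℂ H := Kᗮ with hW
  haveI : Nontrivial W := ⟨⟨v, hv⟩, 0, by simp [hv0]⟩
  have hUW : ∀ x ∈ W, U x ∈ W := by
    intro x hx
    rw [hW, Submodule.mem_orthogonal] at hx ⊢
    intro u hu
    rw [← ContinuousLinearMap.adjoint_inner_left, ← ContinuousLinearMap.star_eq_adjoint]
    exact hx _ (hUsK u hu)
  have hUsW : ∀ x ∈ W, star U x ∈ W := by
    intro x hx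
    rw [hW, Submodule.mem_orthogonal] at hx ⊢
    intro u hu
    rw [ContinuousLinearMap.star_eq_adjoint, ContinuousLinearMap.adjoint_inner_right]
    exact hx _ (hUK u hu)
  set D : H →L[ℂ] H := 1 - U with hD
  set T : H →L[ℂ] H := star D * D with hT
  have hTexp : T = (2 : ℂ) • 1 - U - star U := by
    rw [hT, hD, star_sub, star_one, sub_mul, one_mul, mul_sub, mul_one, hUl]
    module
  have hTapp : ∀ x : H, T x = (2 : ℂ) • x - U x - star U x := by
    intro x; rw [hTexp]; simp
  have hTW : ∀ x ∈ W, T x ∈ W := by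
    intro x hx
    rw [hTapp]
    exact W.sub_mem (W.sub_mem (W.smul_mem _ hx) (hUW x hx)) (hUsW x hx)
  set T' : W →ₗ[ℂ] W := (T : H →ₗ[ℂ] H).restrict hTW with hT'
  have hT'apply : ∀ x : W, (T' x : H) = T (x : H) := fun x => rfl
  have hTsym : (T : H →ₗ[ℂ] H).IsSymmetric :=
    ContinuousLinearMap.isSelfAdjoint_iff_isSymmetric.mp (IsSelfAdjoint.star_mul_self D)
  have hT'sym : T'.IsSymmetric := by
    intro x y
    have h1 : (inner ℂ ((T' x : W) : H) ((y : W) : H) : ℂ) = inner ℂ ((x : W) : H) ((T' y : W) : H) := by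
      rw [hT'apply, hT'apply]; exact hTsym _ _
    simpa [Submodule.coe_inner] using h1
  have hray : ∀ x : H, (inner ℂ (T x) x : ℂ) = (‖D x‖ : ℂ) ^ 2 := by
    intro x
    rw [hT, ContinuousLinearMap.mul_apply, ContinuousLinearMap.star_eq_adjoint,
      ContinuousLinearMap.adjoint_inner_left, inner_self_eq_norm_sq_to_K]
    norm_cast
  set μ₀ : ℝ := ⨅ x : { x : W // x ≠ 0 },
      RCLike.re (inner ℂ (T' x) (x : W) : ℂ) / ‖(x : W)‖ ^ 2 with hμ₀
  have hmain : Module.End.HasEigenvalue T' (μ₀ : ℂ) :=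
    hT'sym.hasEigenvalue_iInf_of_finiteDimensional
  have hrq : ∀ x : { x : W // x ≠ 0 },
      RCLike.re (inner ℂ (T' x) (x : W) : ℂ) / ‖(x : W)‖ ^ 2
        = ‖D ((x : W) : H)‖ ^ 2 / ‖((x : W) : H)‖ ^ 2 := by
    intro x
    congr 1
    rw [Submodule.coe_inner, hT'apply, hray]
    norm_cast
  have hbdd : BddBelow (Set.range fun x : { x : W // x ≠ 0 } =>
      RCLike.re (inner ℂ (T' x) (x : W) : ℂ) / ‖(x : W)‖ ^ 2) := by
    refine ⟨0, fun r hr => ?_⟩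
    obtain ⟨x, rfl⟩ := hr
    dsimp only
    rw [hrq]
    positivity
  -- extract an eigenvector of T in W with eigenvalue μ₀
  obtain ⟨x₀, hx₀⟩ := hmain.exists_hasEigenvector
  have hx₀ne : (x₀ : H) ≠ 0 := by
    simpa [Submodule.coe_eq_zero] using hx₀.right
  have hx₀eq : T (x₀ : H) = (μ₀ : ℂ) • (x₀ : H) := by
    have := hx₀.apply_eq_smul
    calc T (x₀ : H) = ((T' x₀ : W) : H) := (hT'apply x₀).symm
    _ = (μ₀ : ℂ) • (x₀ : H) := by rw [this]; simp
  -- the joint eigenspace E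
  set E : Submodule ℂ H := W ⊓ Module.End.eigenspace (T : H →ₗ[ℂ] H) ((μ₀ : ℝ) : ℂ) with hE
  have hx₀E : (x₀ : H) ∈ E :=
    Submodule.mem_inf.mpr ⟨x₀.2, Module.End.mem_eigenspace_iff.mpr hx₀eq⟩
  haveI : Nontrivial E := ⟨⟨(x₀ : H), hx₀E⟩, 0, by simp [hx₀ne]⟩
  have hUU : ∀ x : H, star U (U x) = x := by
    intro x; rw [← ContinuousLinearMap.mul_apply, hUl, ContinuousLinearMap.one_apply]
  have hUU' : ∀ x : H, U (star U x) = x := by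
    intro x; rw [← ContinuousLinearMap.mul_apply, hUr, ContinuousLinearMap.one_apply]
  have hUE : ∀ x ∈ E, U x ∈ E := by
    intro x hx
    obtain ⟨hxW, hxe⟩ := Submodule.mem_inf.mp hx
    rw [Module.End.mem_eigenspace_iff] at hxe
    refine Submodule.mem_inf.mpr ⟨hUW x hxW, Module.End.mem_eigenspace_iff.mpr ?_⟩
    have h1 : T (U x) = U (T x) := by
      rw [hTapp, hTapp, hUU, map_sub, map_sub, map_smul, hUU']
    show T (U x) = _
    rw [h1]
    show U (T x) = _
    rw [show (T : H →ₗ[ℂ] H) x = T x from rfl] at hxe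
    rw [hxe, map_smul]
  have hUE' : ∀ x ∈ E, (U : H →ₗ[ℂ] H) x ∈ E := hUE
  set UE : E →ₗ[ℂ] E := (U : H →ₗ[ℂ] H).restrict hUE' with hUE''
  obtain ⟨μ, hμ⟩ := Module.End.exists_eigenvalue UE
  obtain ⟨y, hy⟩ := hμ.exists_hasEigenvector
  have hyne : ((y : E) : H) ≠ 0 := by
    simpa [Submodule.coe_eq_zero] using hy.right
  have hyH : U ((y : E) : H) = μ • ((y : E) : H) := by
    have := hy.apply_eq_smul
    calc U ((y : E) : H) = ((UE y : E) : H) := rfl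
    _ = μ • ((y : E) : H) := by rw [this]; simp
  have hμabs : ‖μ‖ = 1 := by
    have h1 := hUiso ((y : E) : H)
    rw [hyH, norm_smul] at h1
    have h2 : ‖((y : E) : H)‖ ≠ 0 := norm_ne_zero_iff.mpr hyne
    field_simp at h1
    exact h1
  have hμne : μ ≠ 0 := by
    intro h; rw [h] at hμabs; simp at hμabs
  set φ : ℝ := μ.arg with hφ
  have hexp : Complex.exp (φ * Complex.I) = μ := by
    have := Complex.norm_mul_exp_arg_mul_I μ
    rwa [hμabs, Complex.ofReal_one, one_mul] at this
  -- the phase must be large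
  have hφΘ : Θ < |φ| := by
    by_contra h
    push_neg at h
    have hyS : ((y : E) : H) ∈ S := ⟨φ, h, by rw [hexp, hyH]⟩
    have hyK : ((y : E) : H) ∈ K := Submodule.subset_span hyS
    have hyW : ((y : E) : H) ∈ W := (y : E).2.1
    exact hyne (Submodule.disjoint_def.mp K.orthogonal_disjoint _ hyK hyW)
  have hφπ : |φ| ≤ Real.pi := Complex.abs_arg_le_pi μ
  -- compute μ₀ = 2 - 2 cos φ
  have hUsy : star U ((y : E) : H) = (starRingEnd ℂ) μ • ((y : E) : H) := by
    have h1 : μ • star U ((y : E) : H) = ((y : E) : H) := by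
      rw [← map_smul, ← hyH, hUU]
    have h2 : μ • ((starRingEnd ℂ) μ • ((y : E) : H)) = ((y : E) : H) := by
      rw [smul_smul, Complex.mul_conj]
      have : Complex.normSq μ = 1 := by
        have := hμabs
        rw [← Complex.sq_norm, this]; norm_num
      rw [this]; simp
    exact smul_right_injective H hμne (h1.trans h2.symm)
  have hyeig : T ((y : E) : H) = ((μ₀ : ℝ) : ℂ) • ((y : E) : H) := by
    have h := (Submodule.mem_inf.mp (y : E).2).2
    rw [Module.End.mem_eigenspace_iff] at h
    exact h
  have hμ₀eq : ((μ₀ : ℝ) : ℂ) = 2 - μ - (starRingEnd ℂ) μ := by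
    have h1 : T ((y : E) : H) = (2 - μ - (starRingEnd ℂ) μ) • ((y : E) : H) := by
      rw [hTapp, hyH, hUsy]
      module
    have h2 : (((μ₀ : ℝ) : ℂ) - (2 - μ - (starRingEnd ℂ) μ)) • ((y : E) : H) = 0 := by
      rw [sub_smul, ← hyeig, h1, sub_self]
    rcases smul_eq_zero.mp h2 with h | h
    · exact sub_eq_zero.mp h
    · exact absurd h hyne
  have hre : μ.re = Real.cos φ := by
    conv_lhs => rw [← hexp]
    rw [Complex.exp_mul_I]
    simp [Complex.cos_ofReal_re]
  have hμ₀val : μ₀ = 2 - 2 * Real.cos φ := by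
    have h := congrArg Complex.re hμ₀eq
    simp only [Complex.sub_re, Complex.ofReal_re, Complex.conj_re] at h
    rw [hre] at h
    norm_num at h
    linarith
  have hcos : Real.cos φ ≤ Real.cos Θ := by
    rw [← Real.cos_abs φ]
    exact Real.cos_le_cos_of_nonneg_of_le_pi hΘ0.le hφπ hφΘ.le
  have hμ₀ge : 2 - 2 * Real.cos Θ ≤ μ₀ := by rw [hμ₀val]; linarith
  have hvW : (⟨v, hv⟩ : W) ≠ 0 := by simp [hv0]
  have hle : μ₀ ≤ ‖D v‖ ^ 2 / ‖v‖ ^ 2 := by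
    have h := ciInf_le hbdd ⟨⟨v, hv⟩, hvW⟩
    rwa [hrq] at h
  have hv2 : (0:ℝ) < ‖v‖ ^ 2 := by
    have : ‖v‖ ≠ 0 := norm_ne_zero_iff.mpr hv0
    positivity
  have hfin : 2 - 2 * Real.cos Θ ≤ ‖D v‖ ^ 2 / ‖v‖ ^ 2 := le_trans hμ₀ge hle
  have hDv : D v = v - U v := by simp [hD]
  rw [← hDv]
  calc (2 - 2 * Real.cos Θ) * ‖v‖ ^ 2 ≤ (‖D v‖ ^ 2 / ‖v‖ ^ 2) * ‖v‖ ^ 2 :=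
        mul_le_mul_of_nonneg_right hfin hv2.le
  _ = ‖D v‖ ^ 2 := div_mul_cancel₀ _ hv2.ne'

lemma iso_of_unitary (V : H →L[ℂ] H) (h : star V * V = 1) (x : H) : ‖V x‖ = ‖x‖ := by
  have h1 : (inner ℂ (V x) (V x) : ℂ) = inner ℂ x x := by
    rw [← ContinuousLinearMap.adjoint_inner_left, ← ContinuousLinearMap.star_eq_adjoint,
      ← ContinuousLinearMap.mul_apply, h, ContinuousLinearMap.one_apply]
  rw [inner_self_eq_norm_sq_to_K, inner_self_eq_norm_sq_to_K] at h1
  have h2 : ‖V x‖ ^ 2 = ‖x‖ ^ 2 := by exact_mod_cast h1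
  nlinarith [norm_nonneg (V x), norm_nonneg x]

lemma span_invariant (U : H →L[ℂ] H) (Θ : ℝ) :
    ∀ x ∈ Submodule.span ℂ {x : H | ∃ φ : ℝ, |φ| ≤ Θ ∧ U x = Complex.exp (φ * Complex.I) • x},
      U x ∈ Submodule.span ℂ {x : H | ∃ φ : ℝ, |φ| ≤ Θ ∧ U x = Complex.exp (φ * Complex.I) • x} := by
  intro x hx
  have : Submodule.span ℂ {x : H | ∃ φ : ℝ, |φ| ≤ Θ ∧ U x = Complex.exp (φ * Complex.I) • x}
      ≤ Submodule.comap (U : H →ₗ[ℂ] H)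
        (Submodule.span ℂ {x : H | ∃ φ : ℝ, |φ| ≤ Θ ∧ U x = Complex.exp (φ * Complex.I) • x}) := by
    rw [Submodule.span_le]
    rintro y ⟨φ, hφ, hy⟩
    simp only [Submodule.mem_comap, SetLike.mem_coe]
    show U y ∈ _
    rw [hy]
    exact Submodule.smul_mem _ _ (Submodule.subset_span ⟨φ, hφ, hy⟩)
  exact this hx

lemma span_invariant_star (U : H →L[ℂ] H) (hUl : star U * U = 1) (Θ : ℝ) :
    ∀ x ∈ Submodule.span ℂ {x : H | ∃ φ : ℝ, |φ| ≤ Θ ∧ U x = Complex.exp (φ * Complex.I) • x},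
      star U x ∈ Submodule.span ℂ
        {x : H | ∃ φ : ℝ, |φ| ≤ Θ ∧ U x = Complex.exp (φ * Complex.I) • x} := by
  intro x hx
  have : Submodule.span ℂ {x : H | ∃ φ : ℝ, |φ| ≤ Θ ∧ U x = Complex.exp (φ * Complex.I) • x}
      ≤ Submodule.comap ((star U : H →L[ℂ] H) : H →ₗ[ℂ] H)
        (Submodule.span ℂ {x : H | ∃ φ : ℝ, |φ| ≤ Θ ∧ U x = Complex.exp (φ * Complex.I) • x}) := by
    rw [Submodule.span_le]
    rintro y ⟨φ, hφ, hy⟩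
    simp only [Submodule.mem_comap, SetLike.mem_coe]
    show star U y ∈ _
    have he : Complex.exp (φ * Complex.I) ≠ 0 := Complex.exp_ne_zero _
    have h1 : Complex.exp (φ * Complex.I) • star U y = y := by
      have h0 : star U (U y) = y := by
        rw [← ContinuousLinearMap.mul_apply, hUl, ContinuousLinearMap.one_apply]
      have h2 := congrArg (⇑(star U)) hy
      rw [ContinuousLinearMap.map_smul] at h2
      rw [← h2, h0]
    have h2 : star U y = (Complex.exp (φ * Complex.I))⁻¹ • y :=
      ((inv_smul_eq_iff₀ he).mpr h1.symm).symm
    rw [h2]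
    exact Submodule.smul_mem _ _ (Submodule.subset_span ⟨φ, hφ, hy⟩)
  exact this hx



end Aux

set_option maxHeartbeats 2000000 in
/-- **Positive analysis.** -/
theorem positive_analysis {H : Type*} [NormedAddCommGroup H] [InnerProductSpace ℂ H]
    [FiniteDimensional ℂ H]
    (A B : Submodule ℂ H) (δ : ℝ) (hδ : 0 ≤ δ) (Θ : ℝ) (hΘ : Θ ∈ Set.Ioo 0 Real.pi)
    (ψ₀ w : H) (hψ₀ : ‖ψ₀‖ = 1)
    (hover : (inner ℂ ψ₀ w : ℂ) ≠ 0)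
    (hA : ‖projOnto A w‖ ^ 2 ≤ δ * ‖w‖ ^ 2)
    (hB : ‖projOnto B w‖ ^ 2 ≤ δ * ‖w‖ ^ 2) :
    ‖(inner ℂ ψ₀ w : ℂ)‖ / ‖w‖ - 2 * Real.sqrt δ * Real.pi / Θ
      ≤ ‖smallPhaseProj (((2:ℂ) • projOnto A - 1) * ((2:ℂ) • projOnto B - 1)) Θ ψ₀‖ := by
  obtain ⟨hΘ0, hΘπ⟩ := hΘ
  set PA : H →L[ℂ] H := projOnto A with hPAdef
  set PB : H →L[ℂ] H := projOnto B with hPBdef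
  set RA : H →L[ℂ] H := (2:ℂ) • PA - 1 with hRAdef
  set RB : H →L[ℂ] H := (2:ℂ) • PB - 1 with hRBdef
  set U : H →L[ℂ] H := RA * RB with hUdef
  have hRAsa : star RA = RA := (refl_sa A).star_eq
  have hRBsa : star RB = RB := (refl_sa B).star_eq
  have hRA2 : RA * RA = 1 := refl_sq A
  have hRB2 : RB * RB = 1 := refl_sq B
  have hsU : star U = RB * RA := by rw [hUdef, star_mul, hRAsa, hRBsa]
  have hUl : star U * U = 1 := by
    rw [hsU, hUdef, mul_assoc, ← mul_assoc RA, hRA2, one_mul, hRB2]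
  have hUr : U * star U = 1 := by
    rw [hsU, hUdef, mul_assoc, ← mul_assoc RB, hRB2, one_mul, hRA2]
  have hUiso := iso_of_unitary U hUl
  have hRAiso := iso_of_unitary RA (by rw [hRAsa, hRA2])
  have hw0 : w ≠ 0 := by rintro rfl; simp at hover
  have hwpos : 0 < ‖w‖ := norm_pos_iff.mpr hw0
  have hsA : ‖PA w‖ ≤ Real.sqrt δ * ‖w‖ := by
    have h1 : Real.sqrt (‖PA w‖ ^ 2) ≤ Real.sqrt (δ * ‖w‖ ^ 2) := Real.sqrt_le_sqrt hA
    rwa [Real.sqrt_sq (norm_nonneg _), Real.sqrt_mul hδ, Real.sqrt_sq (norm_nonneg _)] at h1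
  have hsB : ‖PB w‖ ≤ Real.sqrt δ * ‖w‖ := by
    have h1 : Real.sqrt (‖PB w‖ ^ 2) ≤ Real.sqrt (δ * ‖w‖ ^ 2) := Real.sqrt_le_sqrt hB
    rwa [Real.sqrt_sq (norm_nonneg _), Real.sqrt_mul hδ, Real.sqrt_sq (norm_nonneg _)] at h1
  have hDw : ‖w - U w‖ ≤ 4 * Real.sqrt δ * ‖w‖ := by
    have h0 : RA ((RA - RB) w) = (RA * RA) w - (RA * RB) w := by
      simp [ContinuousLinearMap.sub_apply, map_sub, ContinuousLinearMap.mul_apply]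
    have h1 : w - U w = RA ((RA - RB) w) := by
      rw [h0, hRA2, ← hUdef, ContinuousLinearMap.one_apply]
    rw [h1, hRAiso]
    have h2 : (RA - RB) w = (2:ℂ) • (PA w - PB w) := by
      simp only [hRAdef, hRBdef, ContinuousLinearMap.sub_apply,
        ContinuousLinearMap.smul_apply, ContinuousLinearMap.one_apply, smul_sub]
      abel
    rw [h2, norm_smul]
    have h3 : ‖PA w - PB w‖ ≤ ‖PA w‖ + ‖PB w‖ := norm_sub_le _ _
    have h4 : ‖(2:ℂ)‖ = 2 := by norm_num
    rw [h4]
    linarith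
  set S : Set H := {x : H | ∃ φ : ℝ, |φ| ≤ Θ ∧ U x = Complex.exp (φ * Complex.I) • x} with hSdef
  set K : Submodule ℂ H := Submodule.span ℂ S with hKdef
  have hUK := span_invariant U Θ
  have hUsK := span_invariant_star U hUl Θ
  have key := spectral_bound U hUiso hUl hUr Θ hΘ0 hΘπ.le hUK hUsK
  have hUWc : ∀ x ∈ Kᗮ, U x ∈ Kᗮ := by
    intro x hx
    rw [Submodule.mem_orthogonal] at hx ⊢
    intro u hu
    rw [← ContinuousLinearMap.adjoint_inner_left, ← ContinuousLinearMap.star_eq_adjoint]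
    exact hx _ (hUsK u hu)
  set p : H := (K.orthogonalProjectionOnto ψ₀ : H) with hp
  set q : H := (K.orthogonalProjectionOnto w : H) with hq
  have hpK : p ∈ K := SetLike.coe_mem _
  have hqK : q ∈ K := SetLike.coe_mem _
  have hψp : ψ₀ - p ∈ Kᗮ := K.sub_starProjection_mem_orthogonal ψ₀
  have hwq : w - q ∈ Kᗮ := K.sub_starProjection_mem_orthogonal w
  have hsplit : w - U w = (q - U q) + ((w - q) - U (w - q)) := by
    rw [map_sub]; abel
  have hmemK : q - U q ∈ K := K.sub_mem hqK (hUK q hqK)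
  have hmemKc : (w - q) - U (w - q) ∈ Kᗮ := Kᗮ.sub_mem hwq (hUWc _ hwq)
  have hinner0 : (inner ℂ (q - U q) ((w - q) - U (w - q)) : ℂ) = 0 :=
    Submodule.inner_right_of_mem_orthogonal hmemK hmemKc
  have hpyth : ‖w - U w‖ * ‖w - U w‖
      = ‖q - U q‖ * ‖q - U q‖ + ‖(w - q) - U (w - q)‖ * ‖(w - q) - U (w - q)‖ := by
    rw [hsplit]
    exact norm_add_sq_eq_norm_sq_add_norm_sq_of_inner_eq_zero _ _ hinner0
  have hDwq2 : ‖(w - q) - U (w - q)‖ ^ 2 ≤ (4 * Real.sqrt δ * ‖w‖) ^ 2 := by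
    have h5 : 0 ≤ ‖w - U w‖ := norm_nonneg _
    nlinarith [mul_self_nonneg (‖q - U q‖)]
  have hkey := key (w - q) hwq
  have hπ : (0:ℝ) < Real.pi := Real.pi_pos
  have h4 : Θ / Real.pi ≤ Real.sin (Θ / 2) := by
    have h := Real.mul_le_sin (x := Θ / 2) (by linarith) (by linarith)
    calc Θ / Real.pi = 2 / Real.pi * (Θ / 2) := by ring
    _ ≤ _ := h
  have hcosid : 2 - 2 * Real.cos Θ = 4 * Real.sin (Θ / 2) ^ 2 := by
    have h := Real.sin_sq_eq_half_sub (Θ / 2)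
    rw [show 2 * (Θ / 2) = Θ by ring] at h
    linarith
  have hΘπpos : 0 < Θ / Real.pi := by positivity
  have hlow : 4 * (Θ / Real.pi) ^ 2 * ‖w - q‖ ^ 2 ≤ ‖(w - q) - U (w - q)‖ ^ 2 := by
    have h6 : (Θ / Real.pi) ^ 2 ≤ Real.sin (Θ / 2) ^ 2 := by nlinarith
    calc 4 * (Θ / Real.pi) ^ 2 * ‖w - q‖ ^ 2 ≤ (2 - 2 * Real.cos Θ) * ‖w - q‖ ^ 2 := by
          rw [hcosid]; nlinarith [sq_nonneg ‖w - q‖]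
    _ ≤ _ := hkey
  have hwqle : ‖w - q‖ ≤ 2 * Real.sqrt δ * Real.pi / Θ * ‖w‖ := by
    have hsq : (2 * (Θ / Real.pi) * ‖w - q‖) ^ 2 ≤ (4 * Real.sqrt δ * ‖w‖) ^ 2 := by nlinarith
    have h5 : 2 * (Θ / Real.pi) * ‖w - q‖ ≤ 4 * Real.sqrt δ * ‖w‖ := by
      have hl : 0 ≤ 2 * (Θ / Real.pi) * ‖w - q‖ := by positivity
      have hr : 0 ≤ 4 * Real.sqrt δ * ‖w‖ := by positivity
      nlinarith
    have h6 : ‖w - q‖ * (2 * Θ / Real.pi) ≤ 4 * Real.sqrt δ * ‖w‖ := by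
      calc ‖w - q‖ * (2 * Θ / Real.pi) = 2 * (Θ / Real.pi) * ‖w - q‖ := by ring
      _ ≤ _ := h5
    have h7 : ‖w - q‖ ≤ 4 * Real.sqrt δ * ‖w‖ / (2 * Θ / Real.pi) :=
      (le_div_iff₀ (by positivity)).mpr h6
    calc ‖w - q‖ ≤ 4 * Real.sqrt δ * ‖w‖ / (2 * Θ / Real.pi) := h7
    _ = 2 * Real.sqrt δ * Real.pi / Θ * ‖w‖ := by
        field_simp
        ring
  have hip : (inner ℂ p (ψ₀ - p) : ℂ) = 0 := Submodule.inner_right_of_mem_orthogonal hpK hψp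
  have hP1 : ‖ψ₀ - p‖ ≤ 1 := by
    have h8 := norm_add_sq_eq_norm_sq_add_norm_sq_of_inner_eq_zero p (ψ₀ - p) hip
    rw [show p + (ψ₀ - p) = ψ₀ by abel, hψ₀] at h8
    nlinarith [norm_nonneg (ψ₀ - p), mul_self_nonneg ‖p‖]
  have hinq : (inner ℂ (ψ₀ - p) q : ℂ) = 0 := Submodule.inner_left_of_mem_orthogonal hqK hψp
  have hdecomp : (inner ℂ ψ₀ w : ℂ) = inner ℂ p w + inner ℂ (ψ₀ - p) (w - q) := by
    have h9 : (inner ℂ ψ₀ w : ℂ) = inner ℂ (p + (ψ₀ - p)) w := by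
      rw [show p + (ψ₀ - p) = ψ₀ by abel]
    rw [h9, inner_add_left, inner_sub_right, hinq, sub_zero]
  have htotal : ‖(inner ℂ ψ₀ w : ℂ)‖ ≤ ‖p‖ * ‖w‖ + 2 * Real.sqrt δ * Real.pi / Θ * ‖w‖ := by
    rw [hdecomp]
    calc ‖(inner ℂ p w : ℂ) + inner ℂ (ψ₀ - p) (w - q)‖
        ≤ ‖(inner ℂ p w : ℂ)‖ + ‖(inner ℂ (ψ₀ - p) (w - q) : ℂ)‖ := norm_add_le _ _
    _ ≤ ‖p‖ * ‖w‖ + ‖ψ₀ - p‖ * ‖w - q‖ :=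
        add_le_add (norm_inner_le_norm _ _) (norm_inner_le_norm _ _)
    _ ≤ ‖p‖ * ‖w‖ + 1 * (2 * Real.sqrt δ * Real.pi / Θ * ‖w‖) :=
        add_le_add_right (mul_le_mul hP1 hwqle (norm_nonneg _) zero_le_one) _
    _ = ‖p‖ * ‖w‖ + 2 * Real.sqrt δ * Real.pi / Θ * ‖w‖ := by ring
  have hgoal : smallPhaseProj U Θ ψ₀ = p := rfl
  rw [hgoal, sub_le_iff_le_add, div_le_iff₀ hwpos]
  have hring : (‖p‖ + 2 * Real.sqrt δ * Real.pi / Θ) * ‖w‖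
      = ‖p‖ * ‖w‖ + 2 * Real.sqrt δ * Real.pi / Θ * ‖w‖ := by ring
  linarith [htotal]
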